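/- arXiv:2605.10908 — 3 statements merged into one kernel-verified Lean document; each statement's English description precedes it below -/
import Mathlib

section
/- For every positive integer q and every n ≥ 1, the set of probability distributions on ℝⁿ of random vectors that can be written as the sum of q standard Gaussian vectors is closed under weak convergence: if a sequence of random vectors, each expressible as the sum of q standard Gaussian vectors, converges weakly to a random vector X, then X is also the sum of q standard Gaussian vectors. -/
open MeasureTheory Real Filter
open scoped ENNReal BoundedContinuousFunction

/-- The standard Gaussian measure `N(0, Iₙ)` on `ℝⁿ`. -/
noncomputable def stdGaussian (n : ℕ) : Measure (EuclideanSpace ℝ (Fin n)) :=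
  (MeasureTheory.Measure.pi fun _ : Fin n => ProbabilityTheory.gaussianReal 0 1).map
    (MeasurableEquiv.toLp 2 (Fin n → ℝ))

/-- `μ` is the distribution of the sum of `k` standard Gaussian random vectors in `ℝⁿ`,
defined on a common probability space. -/
def IsSumOfStdGaussians (n k : ℕ) (μ : Measure (EuclideanSpace ℝ (Fin n))) : Prop :=
  ∃ (Ω : Type) (_ : MeasurableSpace Ω) (P : Measure Ω)
    (Y : Fin k → Ω → EuclideanSpace ℝ (Fin n)),
    IsProbabilityMeasure P ∧ (∀ i, Measurable (Y i)) ∧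
    (∀ i, Measure.map (Y i) P = stdGaussian n) ∧
    Measure.map (fun ω => ∑ i, Y i ω) P = μ

/-! The joint laws of `q` standard Gaussian vectors in `ℝⁿ` form a closed set of probability
measures on `(ℝⁿ)^q`, and a tight one because every marginal is the same measure `N(0, Iₙ)`;
by Prokhorov's theorem it is compact. The laws of the sums are its image under push-forward by
the continuous map `x ↦ ∑ i, x i`, hence compact, hence closed for weak convergence. -/

namespace MeasureTheory.IsTightMeasureSet

variable {ι : Type*} [Fintype ι] {X : ι → Type*} [∀ i, TopologicalSpace (X i)]
  [∀ i, MeasurableSpace (X i)]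

lemma pi {S : Set (Measure (∀ i, X i))}
    (hS : ∀ i, IsTightMeasureSet ((fun μ ↦ μ.map (Function.eval i)) '' S)) :
    IsTightMeasureSet S := by
  simp_rw [isTightMeasureSet_iff_exists_isCompact_measure_compl_le] at hS ⊢
  intro ε hε
  choose K hK_compact hK_le using fun i ↦ hS i (ε / Fintype.card ι) (by simp [hε.ne'])
  refine ⟨Set.univ.pi K, isCompact_univ_pi hK_compact, fun μ hμ ↦ ?_⟩
  calc μ (Set.univ.pi K)ᶜ
      = μ (⋃ i, Function.eval i ⁻¹' (K i)ᶜ) := by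
        congr 1; ext x; simp [Set.mem_pi]
    _ ≤ ∑ i, μ (Function.eval i ⁻¹' (K i)ᶜ) := measure_iUnion_fintype_le _ _
    _ ≤ ∑ _i : ι, ε / Fintype.card ι := by
        gcongr with i
        exact (Measure.le_map_apply (measurable_pi_apply i).aemeasurable _).trans
          (hK_le i _ ⟨μ, hμ, rfl⟩)
    _ ≤ ε := by simpa using ENNReal.mul_div_le

end MeasureTheory.IsTightMeasureSet

lemma isCompact_setOf_map_eval_eq {ι : Type*} [Fintype ι] {X : ι → Type*}
    [∀ i, TopologicalSpace (X i)] [∀ i, PolishSpace (X i)] [∀ i, MeasurableSpace (X i)]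
    [∀ i, BorelSpace (X i)] (G : ∀ i, Measure (X i)) [∀ i, IsFiniteMeasure (G i)] :
    IsCompact {ρ : ProbabilityMeasure (∀ i, X i) |
      ∀ i, (ρ : Measure (∀ i, X i)).map (Function.eval i) = G i} := by
  set C := {ρ : ProbabilityMeasure (∀ i, X i) |
      ∀ i, (ρ : Measure (∀ i, X i)).map (Function.eval i) = G i}
  have hclosed : IsClosed C := by
    simp only [C, Set.ofPred_forall]
    refine isClosed_iInter fun i ↦ ?_
    have hG : {ρ : ProbabilityMeasure (X i) | ρ = G i}.Subsingleton :=
      fun _ h₁ _ h₂ ↦ ProbabilityMeasure.toMeasure_injective (h₁.trans h₂.symm)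
    exact hG.isClosed.preimage (ProbabilityMeasure.continuous_map (continuous_apply i))
  have htight : IsTightMeasureSet {(ρ : Measure (∀ i, X i)) | ρ ∈ C} := by
    refine IsTightMeasureSet.pi fun i ↦ (isTightMeasureSet_singleton (μ := G i)).subset ?_
    rintro _ ⟨_, ⟨ρ, hρ, rfl⟩, rfl⟩
    exact hρ i
  simpa [hclosed.closure_eq] using isCompact_closure_of_isTightMeasureSet htight

instance isProbabilityMeasure_stdGaussian (n : ℕ) : IsProbabilityMeasure (stdGaussian n) :=
  Measure.isProbabilityMeasure_map (MeasurableEquiv.toLp 2 (Fin n → ℝ)).measurable.aemeasurable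

def stdGaussianCouplings (n q : ℕ) :
    Set (ProbabilityMeasure (Fin q → EuclideanSpace ℝ (Fin n))) :=
  {ρ | ∀ i, (ρ : Measure (Fin q → EuclideanSpace ℝ (Fin n))).map (Function.eval i) =
    stdGaussian n}

lemma isSumOfStdGaussians_iff {n q : ℕ} {μ : Measure (EuclideanSpace ℝ (Fin n))} :
    IsSumOfStdGaussians n q μ ↔ ∃ ρ ∈ stdGaussianCouplings n q,
      (ρ : Measure (Fin q → EuclideanSpace ℝ (Fin n))).map (fun x ↦ ∑ i, x i) = μ := by
  have hsum : Measurable fun x : Fin q → EuclideanSpace ℝ (Fin n) ↦ ∑ i, x i := by fun_prop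
  constructor
  · rintro ⟨Ω, _, P, Y, hP, hY, hY_law, rfl⟩
    have hjoint : Measurable fun ω i ↦ Y i ω := measurable_pi_lambda _ hY
    refine ⟨⟨P.map fun ω i ↦ Y i ω, Measure.isProbabilityMeasure_map hjoint.aemeasurable⟩,
      fun i ↦ ?_, ?_⟩
    · rw [ProbabilityMeasure.coe_mk, Measure.map_map (measurable_pi_apply i) hjoint]
      exact hY_law i
    · rw [ProbabilityMeasure.coe_mk, Measure.map_map hsum hjoint]
      rfl
  · rintro ⟨ρ, hρ, rfl⟩
    exact ⟨Fin q → EuclideanSpace ℝ (Fin n), inferInstance, ρ, fun i x ↦ x i, inferInstance,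
      measurable_pi_apply, hρ, rfl⟩

lemma IsSumOfStdGaussians.isProbabilityMeasure {n q : ℕ}
    {μ : Measure (EuclideanSpace ℝ (Fin n))} (h : IsSumOfStdGaussians n q μ) :
    IsProbabilityMeasure μ := by
  obtain ⟨ρ, -, rfl⟩ := isSumOfStdGaussians_iff.1 h
  exact Measure.isProbabilityMeasure_map (by fun_prop)

lemma isClosed_setOf_isSumOfStdGaussians (n q : ℕ) :
    IsClosed
      {μ : ProbabilityMeasure (EuclideanSpace ℝ (Fin n)) | IsSumOfStdGaussians n q μ} := by
  have hsum : Continuous fun x : Fin q → EuclideanSpace ℝ (Fin n) ↦ ∑ i, x i := by fun_prop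
  have himage :
      {μ : ProbabilityMeasure (EuclideanSpace ℝ (Fin n)) | IsSumOfStdGaussians n q μ} =
      (fun ρ ↦ ρ.map hsum.measurable.aemeasurable) '' stdGaussianCouplings n q := by
    ext μ
    simp only [Set.mem_ofPred_eq, isSumOfStdGaussians_iff, Set.mem_image]
    exact exists_congr fun ρ ↦ and_congr_right fun _ ↦
      ProbabilityMeasure.toMeasure_injective.eq_iff (a := ρ.map _)
  rw [himage]
  exact ((isCompact_setOf_map_eval_eq _).image (ProbabilityMeasure.continuous_map hsum)).isClosed

theorem statement_5_general (q n : ℕ)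
    (μ : ℕ → Measure (EuclideanSpace ℝ (Fin n)))
    (ν : Measure (EuclideanSpace ℝ (Fin n))) (hν : IsProbabilityMeasure ν)
    (hμ : ∀ k, IsSumOfStdGaussians n q (μ k))
    (hconv : ∀ f : BoundedContinuousFunction (EuclideanSpace ℝ (Fin n)) ℝ,
      Tendsto (fun k => ∫ x, f x ∂(μ k)) atTop (nhds (∫ x, f x ∂ν))) :
    IsSumOfStdGaussians n q ν := by
  let μ' k : ProbabilityMeasure (EuclideanSpace ℝ (Fin n)) :=
    ⟨μ k, (hμ k).isProbabilityMeasure⟩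
  have hlim : Tendsto μ' atTop (nhds ⟨ν, hν⟩) :=
    ProbabilityMeasure.tendsto_iff_forall_integral_tendsto.2 hconv
  exact (isClosed_setOf_isSumOfStdGaussians n q).mem_of_tendsto hlim (.of_forall hμ)

/-- For a positive integer `q`, the set of distributions of random vectors in `ℝⁿ`
expressible as the sum of `q` standard Gaussian vectors is closed under weak convergence. -/
theorem statement_5 (q n : ℕ) (hq : 0 < q) (hn : 1 ≤ n)
    (μ : ℕ → Measure (EuclideanSpace ℝ (Fin n)))
    (ν : Measure (EuclideanSpace ℝ (Fin n))) (hν : IsProbabilityMeasure ν)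
    (hμ : ∀ k, IsSumOfStdGaussians n q (μ k))
    (hconv : ∀ f : BoundedContinuousFunction (EuclideanSpace ℝ (Fin n)) ℝ,
      Tendsto (fun k => ∫ x, f x ∂(μ k)) atTop (nhds (∫ x, f x ∂ν))) :
    IsSumOfStdGaussians n q ν :=
  statement_5_general q n μ ν hν hμ hconv
end

section
/- Let μ = Σ_{i=1}^m p_i δ_{x_i} be a centered probability measure on ℝⁿ (with p_i > 0 summing to 1) and let ν be a centered probability measure on ℝⁿ with a density and finite first moment, not supported on any hyperplane. Let Y ∼ ν. Then there exists a martingale coupling (X, Y) of μ and ν (i.e. X ∼ μ, Y ∼ ν, E[Y | X] = X) if and only if there exist nonnegative measurable functions f₁, …, f_m : ℝⁿ → ℝ satisfying Σ_{i=1}^m p_i f_i(x) = 1 for all x, E[f_i(Y)] = 1 for each i, and E[Y f_i(Y)] = x_i for each i. -/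
/-!
A martingale coupling of `μ = ∑ pᵢ δ_{xᵢ}` and `ν` is the same thing as a splitting
`ν = ∑_a ρ_a` over the atoms `a` of `μ` in which `ρ_a` has mass `μ{a}` and barycentre `a`:
given `(X, Y)`, take `ρ_a` to be the law of `Y` on `{X = a}`; the martingale property is exactly
the barycentre condition. From a splitting one gets the `fᵢ` as the Radon–Nikodym densities
`dρ_{xᵢ}/dν`, normalised by `μ{xᵢ}` (they are `P(X = xᵢ | Y = y) / P(X = xᵢ)`). Conversely, given
the `fᵢ`, draw `I = i` with probability `pᵢ`, then `Y` from `fᵢ ν`, and put `X = x_I`.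
-/

open MeasureTheory Real
open scoped RealInnerProductSpace ENNReal

open Finset

lemma MeasureTheory.Measure.rnDeriv_finsetSum {α ι : Type*} [MeasurableSpace α] (ν : Measure α)
    [SigmaFinite ν] (s : Finset ι) (ρ : ι → Measure α) [∀ i, IsFiniteMeasure (ρ i)] :
    (∑ i ∈ s, ρ i).rnDeriv ν =ᵐ[ν] ∑ i ∈ s, (ρ i).rnDeriv ν := by
  classical
  induction s using Finset.induction with
  | empty => simp [Measure.rnDeriv_zero ν]
  | insert a s ha ih =>
    rw [sum_insert ha, sum_insert ha]
    exact (Measure.rnDeriv_add _ _ ν).trans (Filter.EventuallyEq.rfl.add ih)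

lemma ae_sum_toReal_rnDeriv_eq_one {α ι : Type*} [MeasurableSpace α] {ν : Measure α}
    [IsFiniteMeasure ν] {s : Finset ι} {ρ : ι → Measure α} [∀ i, IsFiniteMeasure (ρ i)]
    (h : ∑ i ∈ s, ρ i = ν) : ∀ᵐ y ∂ν, ∑ i ∈ s, ((ρ i).rnDeriv ν y).toReal = 1 := by
  have hfin : ∀ᵐ y ∂ν, ∀ i ∈ s, (ρ i).rnDeriv ν y ≠ ∞ :=
    (Filter.eventually_all_finset s).2 fun i _ =>
      (Measure.rnDeriv_lt_top (ρ i) ν).mono fun _ => ne_of_lt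
  have hsum := Measure.rnDeriv_finsetSum ν s ρ
  rw [h] at hsum
  filter_upwards [hsum, Measure.rnDeriv_self ν, hfin] with y hsum hself hy
  rw [← ENNReal.toReal_sum hy, ← Finset.sum_apply, ← hsum, hself, ENNReal.toReal_one]

lemma sum_smul_dirac_singleton {ι β : Type*} [Fintype ι] [MeasurableSpace β]
    [MeasurableSingletonClass β] [DecidableEq β] {p : ι → ℝ} (hp : ∀ i, 0 ≤ p i) (x : ι → β)
    (a : β) :
    (∑ i, ENNReal.ofReal (p i) • Measure.dirac (x i)) {a} =
      ENNReal.ofReal (∑ i with x i = a, p i) := by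
  rw [ENNReal.ofReal_sum_of_nonneg fun i _ => hp i, sum_filter]
  simp [Measure.finsetSum_apply, Set.indicator, apply_ite]

lemma sum_smul_dirac_compl_image {ι β : Type*} [Fintype ι] [MeasurableSpace β]
    [MeasurableSingletonClass β] [DecidableEq β] (w : ι → ℝ≥0∞) (x : ι → β) :
    (∑ i, w i • Measure.dirac (x i)) (↑(univ.image x))ᶜ = 0 := by
  simp [Measure.finsetSum_apply]

lemma sum_map_restrict_preimage_singleton {Ω β γ : Type*} [MeasurableSpace Ω]
    [MeasurableSpace β] [MeasurableSingletonClass β] [MeasurableSpace γ] {P : Measure Ω}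
    {X : Ω → β} {Y : Ω → γ} (hX : Measurable X) (hY : Measurable Y) {A : Finset β}
    (hA : P (X ⁻¹' (↑A)ᶜ) = 0) :
    ∑ a ∈ A, (P.restrict (X ⁻¹' {a})).map Y = P.map Y := by
  rw [← Measure.map_finset_sum hY.aemeasurable, ← Measure.sum_coe_finset,
    ← Measure.restrict_biUnion_finset
      (fun a _ b _ hab => Disjoint.preimage X (Set.disjoint_singleton.2 hab))
      (fun a => hX (measurableSet_singleton a)),
    ← Set.preimage_iUnion₂, ← Finset.set_biUnion_coe, Set.biUnion_of_singleton,
    Measure.restrict_eq_self_of_ae_mem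
      ((measure_eq_zero_iff_ae_notMem.1 hA).mono fun _ h => by simpa using h)]

lemma setIntegral_preimage_eq_of_condExp_comap_eq {Ω E : Type*} [NormedAddCommGroup E]
    [NormedSpace ℝ E] [CompleteSpace E] [MeasurableSpace E] [MeasurableSpace Ω] {P : Measure Ω}
    [IsFiniteMeasure P] {X Y : Ω → E} (hX : Measurable X) (hY : Integrable Y P)
    (hXY : P[Y | MeasurableSpace.comap X inferInstance] =ᵐ[P] X) {s : Set E}
    (hs : MeasurableSet s) :
    ∫ ω in X ⁻¹' s, Y ω ∂P = ∫ ω in X ⁻¹' s, X ω ∂P := by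
  rw [← setIntegral_condExp hX.comap_le hY ⟨s, hs, rfl⟩]
  exact setIntegral_congr_ae (hX hs) (hXY.mono fun _ h _ => h)

section Mixture

variable {ι α : Type*} [Fintype ι] [MeasurableSpace ι] [MeasurableSpace α]

noncomputable def mixture (p : ι → ℝ) (κ : ι → Measure α) : Measure (ι × α) :=
  ∑ i, ENNReal.ofReal (p i) • (κ i).map (Prod.mk i)

variable {p : ι → ℝ} {κ : ι → Measure α}

instance [∀ i, IsFiniteMeasure (κ i)] : IsFiniteMeasure (mixture p κ) :=
  ⟨by simp [mixture, ENNReal.mul_lt_top, measure_lt_top]⟩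

lemma map_mixture {β : Type*} [MeasurableSpace β] {g : ι × α → β} (hg : Measurable g) :
    (mixture p κ).map g = ∑ i, ENNReal.ofReal (p i) • (κ i).map (fun a => g (i, a)) := by
  rw [mixture, Measure.map_finset_sum hg.aemeasurable]
  refine sum_congr rfl fun i _ => ?_
  rw [Measure.map_smul, Measure.map_map hg measurable_prodMk_left]
  rfl

lemma isProbabilityMeasure_mixture [∀ i, IsProbabilityMeasure (κ i)] (hp : ∀ i, 0 ≤ p i)
    (hpsum : ∑ i, p i = 1) : IsProbabilityMeasure (mixture p κ) := by
  constructor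
  simp [mixture, Measure.map_apply measurable_prodMk_left MeasurableSet.univ,
    ← ENNReal.ofReal_sum_of_nonneg fun i _ => hp i, hpsum]

variable [MeasurableSingletonClass ι] {E : Type*} [NormedAddCommGroup E]

lemma integrable_mixture {g : ι × α → E} (hg : ∀ i, Integrable (fun a => g (i, a)) (κ i)) :
    Integrable g (mixture p κ) :=
  integrable_finsetSum_measure.2 fun i _ =>
    ((measurableEmbedding_prodMk_left i).integrable_map_iff.2 (hg i)).smul_measure
      ENNReal.ofReal_ne_top

variable [NormedSpace ℝ E]

lemma integral_mixture {g : ι × α → E} (hp : ∀ i, 0 ≤ p i)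
    (hg : ∀ i, Integrable (fun a => g (i, a)) (κ i)) :
    ∫ z, g z ∂mixture p κ = ∑ i, p i • ∫ a, g (i, a) ∂κ i := by
  rw [mixture, integral_finsetSum_measure fun i _ => integrable_finsetSum_measure.1
    (integrable_mixture (p := p) hg) i (mem_univ i)]
  refine sum_congr rfl fun i _ => ?_
  rw [integral_smul_measure, (measurableEmbedding_prodMk_left i).integral_map,
    ENNReal.toReal_ofReal (hp i)]

lemma setIntegral_fst_preimage_mixture {g : ι × α → E} (hp : ∀ i, 0 ≤ p i)
    (hg : ∀ i, Integrable (fun a => g (i, a)) (κ i)) (S : Set ι) :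
    ∫ z in Prod.fst ⁻¹' S, g z ∂mixture p κ =
      ∑ i, p i • S.indicator (fun i => ∫ a, g (i, a) ∂κ i) i := by
  have hslice : ∀ i, (fun a => (Prod.fst ⁻¹' S).indicator g (i, a)) =
      S.indicator (fun i a => g (i, a)) i := by
    intro i
    by_cases hi : i ∈ S <;> simp [Set.indicator, hi, Pi.zero_def]
  rw [← integral_indicator (measurable_fst (Set.toFinite S).measurableSet),
    integral_mixture hp fun i => by rw [hslice]; by_cases hi : i ∈ S <;> simp [hi, hg i]]
  refine sum_congr rfl fun i _ => ?_
  rw [hslice]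
  by_cases hi : i ∈ S <;> simp [hi]

end Mixture

lemma condExp_snd_mixture {ι E : Type*} [Fintype ι] [MeasurableSpace ι]
    [DiscreteMeasurableSpace ι] [NormedAddCommGroup E] [NormedSpace ℝ E] [CompleteSpace E]
    [MeasurableSpace E] [BorelSpace E] [SecondCountableTopology E] {p : ι → ℝ}
    {κ : ι → Measure E} [∀ i, IsProbabilityMeasure (κ i)] (hp : ∀ i, 0 ≤ p i) {x : ι → E}
    (hint : ∀ i, Integrable (fun y => y) (κ i)) (hbary : ∀ i, ∫ y, y ∂κ i = x i) :
    (mixture p κ)[Prod.snd | MeasurableSpace.comap (fun z => x z.1) inferInstance]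
      =ᵐ[mixture p κ] fun z => x z.1 := by
  have hX : Measurable fun z : ι × E => x z.1 := Measurable.of_discrete.comp measurable_fst
  have hXint : Integrable (fun z : ι × E => x z.1) (mixture p κ) :=
    integrable_mixture fun i => integrable_const (x i)
  refine (ae_eq_condExp_of_forall_setIntegral_eq hX.comap_le (integrable_mixture hint)
    (fun _ _ _ => hXint.integrableOn) ?_
    (comap_measurable _).stronglyMeasurable.aestronglyMeasurable).symm
  rintro _ ⟨t, -, rfl⟩ -
  rw [show (fun z : ι × E => x z.1) ⁻¹' t = Prod.fst ⁻¹' (x ⁻¹' t) from rfl,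
    setIntegral_fst_preimage_mixture hp fun i => integrable_const (x i),
    setIntegral_fst_preimage_mixture hp hint]
  simp [hbary]

section Densities

variable {ι E : Type*} [Fintype ι] [NormedAddCommGroup E] [NormedSpace ℝ E] [MeasurableSpace E]

def HasMartingaleCoupling [CompleteSpace E] (μ ν : Measure E) : Prop :=
  ∃ (Ω : Type) (_ : MeasurableSpace Ω) (P : Measure Ω) (X Y : Ω → E),
    IsProbabilityMeasure P ∧ Measurable X ∧ Measurable Y ∧ Integrable Y P ∧
    P.map X = μ ∧ P.map Y = ν ∧ P[Y | MeasurableSpace.comap X inferInstance] =ᵐ[P] X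

structure IsMartingaleDensityFamily (p : ι → ℝ) (x : ι → E) (ν : Measure E) (f : ι → E → ℝ) :
    Prop where
  measurable : ∀ i, Measurable (f i)
  nonneg : ∀ i y, 0 ≤ f i y
  sum_mul_eq_one : ∀ y, ∑ i, p i * f i y = 1
  integral_eq_one : ∀ i, ∫ y, f i y ∂ν = 1
  integral_smul_eq : ∀ i, ∫ y, f i y • y ∂ν = x i

structure IsMartingaleSplitting (μ ν : Measure E) (A : Finset E) (ρ : E → Measure E) : Prop where
  sum_eq : ∑ a ∈ A, ρ a = ν
  measure_univ : ∀ a ∈ A, ρ a Set.univ = μ {a}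
  integral_id : ∀ a ∈ A, ∫ y, y ∂ρ a = μ.real {a} • a

namespace IsMartingaleDensityFamily

variable {p : ι → ℝ} {x : ι → E} {ν : Measure E} {f : ι → E → ℝ}

lemma isProbabilityMeasure_withDensity (hf : IsMartingaleDensityFamily p x ν f) (i : ι) :
    IsProbabilityMeasure (ν.withDensity fun y => ENNReal.ofReal (f i y)) := by
  constructor
  rw [withDensity_apply _ MeasurableSet.univ, Measure.restrict_univ,
    ← ofReal_integral_eq_lintegral_ofReal
      (Integrable.of_integral_ne_zero (by simp [hf.integral_eq_one i]))
      (ae_of_all _ (hf.nonneg i)), hf.integral_eq_one i, ENNReal.ofReal_one]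

lemma le_inv (hf : IsMartingaleDensityFamily p x ν f) (hp : ∀ i, 0 < p i) (i : ι) (y : E) :
    f i y ≤ (p i)⁻¹ := by
  rw [← one_div, le_div_iff₀' (hp i), ← hf.sum_mul_eq_one y]
  exact single_le_sum (fun j _ => mul_nonneg (hp j).le (hf.nonneg j y)) (mem_univ i)

lemma integrable_withDensity (hf : IsMartingaleDensityFamily p x ν f) (hp : ∀ i, 0 < p i)
    (hmom : Integrable (fun y => y) ν) (i : ι) :
    Integrable (fun y => y) (ν.withDensity fun y => ENNReal.ofReal (f i y)) := by
  rw [integrable_withDensity_iff_integrable_smul' (hf.measurable i).ennreal_ofReal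
    (ae_of_all _ fun _ => ENNReal.ofReal_lt_top)]
  have : Integrable (fun y => f i y • y) ν :=
    hmom.bdd_smul (p i)⁻¹ (hf.measurable i).aestronglyMeasurable
      (ae_of_all _ fun y => by simpa [abs_of_nonneg (hf.nonneg i y)] using hf.le_inv hp i y)
  simpa [ENNReal.toReal_ofReal (hf.nonneg i _)] using this

lemma integral_withDensity (hf : IsMartingaleDensityFamily p x ν f) (i : ι) :
    ∫ y, y ∂(ν.withDensity fun y => ENNReal.ofReal (f i y)) = x i := by
  rw [integral_withDensity_eq_integral_toReal_smul (hf.measurable i).ennreal_ofReal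
    (ae_of_all _ fun _ => ENNReal.ofReal_lt_top)]
  simpa [ENNReal.toReal_ofReal (hf.nonneg i _)] using hf.integral_smul_eq i

lemma sum_smul_withDensity (hf : IsMartingaleDensityFamily p x ν f) (hp : ∀ i, 0 ≤ p i) :
    ∑ i, ENNReal.ofReal (p i) • ν.withDensity (fun y => ENNReal.ofReal (f i y)) = ν := by
  ext s hs
  simp only [Measure.finsetSum_apply, Measure.smul_apply, withDensity_apply _ hs, smul_eq_mul]
  calc ∑ i, ENNReal.ofReal (p i) * ∫⁻ y in s, ENNReal.ofReal (f i y) ∂ν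
      = ∑ i, ∫⁻ y in s, ENNReal.ofReal (p i * f i y) ∂ν := by
        refine sum_congr rfl fun i _ => ?_
        rw [← lintegral_const_mul _ (hf.measurable i).ennreal_ofReal]
        simp_rw [ENNReal.ofReal_mul (hp i)]
    _ = ∫⁻ y in s, ∑ i, ENNReal.ofReal (p i * f i y) ∂ν :=
        (lintegral_finsetSum _ fun i _ => ((hf.measurable i).const_mul _).ennreal_ofReal).symm
    _ = ∫⁻ y in s, 1 ∂ν := lintegral_congr fun y => by
        rw [← ENNReal.ofReal_sum_of_nonneg fun i _ => mul_nonneg (hp i) (hf.nonneg i y),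
          hf.sum_mul_eq_one, ENNReal.ofReal_one]
    _ = ν s := setLIntegral_one s

lemma exists_of_ae (hpsum : ∑ i, p i = 1) {g : ι → E → ℝ} (hgm : ∀ i, Measurable (g i))
    (hg0 : ∀ i y, 0 ≤ g i y) (hgsum : ∀ᵐ y ∂ν, ∑ i, p i * g i y = 1)
    (hg1 : ∀ i, ∫ y, g i y ∂ν = 1) (hgx : ∀ i, ∫ y, g i y • y ∂ν = x i) :
    ∃ f, IsMartingaleDensityFamily p x ν f := by
  set S := {y | ∑ i, p i * g i y = 1}
  have hS : MeasurableSet S :=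
    (Finset.measurable_sum _ fun i _ => (hgm i).const_mul (p i)) (measurableSet_singleton 1)
  have hfg : ∀ i, S.piecewise (g i) 1 =ᵐ[ν] g i := fun i => by
    filter_upwards [hgsum] with y hy
    exact S.piecewise_eq_of_mem _ _ hy
  refine ⟨fun i => S.piecewise (g i) 1, fun i => (hgm i).piecewise hS measurable_const,
    fun i y => ?_, fun y => ?_, fun i => ?_, fun i => ?_⟩
  · by_cases hy : y ∈ S <;> simp [hy, hg0]
  · by_cases hy : y ∈ S
    · simp only [S.piecewise_eq_of_mem _ _ hy]
      exact hy
    · simp only [S.piecewise_eq_of_notMem _ _ hy, Pi.one_apply, mul_one]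
      exact hpsum
  · rw [integral_congr_ae (hfg i), hg1]
  · rw [integral_congr_ae ((hfg i).smul Filter.EventuallyEq.rfl), hgx]

end IsMartingaleDensityFamily

lemma IsMartingaleSplitting.exists_isMartingaleDensityFamily [MeasurableSingletonClass E]
    [DecidableEq E] {p : ι → ℝ} {x : ι → E} {ν : Measure E} [IsFiniteMeasure ν]
    {ρ : E → Measure E} [∀ a, IsFiniteMeasure (ρ a)]
    (h : IsMartingaleSplitting (∑ i, ENNReal.ofReal (p i) • Measure.dirac (x i)) ν
      (univ.image x) ρ)
    (hp : ∀ i, 0 < p i) (hpsum : ∑ i, p i = 1) :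
    ∃ f, IsMartingaleDensityFamily p x ν f := by
  set μ := ∑ i, ENNReal.ofReal (p i) • Measure.dirac (x i)
  have hmem : ∀ i, x i ∈ univ.image x := fun i => mem_image_of_mem x (mem_univ i)
  have hq : ∀ i, μ.real {x i} = ∑ j with x j = x i, p j := fun i => by
    rw [measureReal_def, sum_smul_dirac_singleton (fun j => (hp j).le),
      ENNReal.toReal_ofReal (sum_nonneg fun j _ => (hp j).le)]
  have hqpos : ∀ i, 0 < μ.real {x i} := fun i => (hq i).symm ▸
    sum_pos' (fun j _ => (hp j).le) ⟨i, mem_filter.2 ⟨mem_univ i, rfl⟩, hp i⟩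
  have hac : ∀ i, ρ (x i) ≪ ν := fun i => Measure.absolutelyContinuous_of_le
    (h.sum_eq ▸ single_le_sum (fun _ _ => Measure.zero_le _) (hmem i))
  refine IsMartingaleDensityFamily.exists_of_ae hpsum
    (g := fun i y => ((ρ (x i)).rnDeriv ν y).toReal / μ.real {x i})
    (fun i => (Measure.measurable_rnDeriv _ _).ennreal_toReal.div_const _)
    (fun i y => div_nonneg ENNReal.toReal_nonneg (hqpos i).le) ?_ (fun i => ?_) (fun i => ?_)
  · filter_upwards [ae_sum_toReal_rnDeriv_eq_one h.sum_eq] with y hy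
    rw [← hy]
    -- the weights `p j` of the indices with `x j = x i` add up to `μ {x i}`
    refine (sum_image' _ fun i _ => ?_).symm
    rw [sum_congr rfl fun j hj => by rw [(mem_filter.1 hj).2], ← sum_mul, ← hq,
      mul_div_cancel₀ _ (hqpos i).ne']
  · rw [integral_div, Measure.integral_toReal_rnDeriv (hac i), measureReal_def,
      h.measure_univ _ (hmem i), ← measureReal_def, div_self (hqpos i).ne']
  · simp_rw [div_eq_inv_mul, mul_smul]
    rw [integral_smul, integral_rnDeriv_smul (hac i), h.integral_id _ (hmem i), smul_smul,
      inv_mul_cancel₀ (hqpos i).ne', one_smul]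

variable [CompleteSpace E] [BorelSpace E] [SecondCountableTopology E]

lemma isMartingaleSplitting_of_condExp_comap_eq {Ω : Type*} [MeasurableSpace Ω]
    {P : Measure Ω} [IsFiniteMeasure P] {X Y : Ω → E} (hX : Measurable X) (hY : Measurable Y)
    (hYint : Integrable Y P) (hXY : P[Y | MeasurableSpace.comap X inferInstance] =ᵐ[P] X)
    {A : Finset E} (hA : P (X ⁻¹' (↑A)ᶜ) = 0) :
    IsMartingaleSplitting (P.map X) (P.map Y) A fun a => (P.restrict (X ⁻¹' {a})).map Y where
  sum_eq := sum_map_restrict_preimage_singleton hX hY hA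
  measure_univ a _ := by
    rw [Measure.map_apply hY .univ, Measure.map_apply hX (measurableSet_singleton a),
      Set.preimage_univ, Measure.restrict_apply_univ]
  integral_id a _ := by
    rw [integral_map (f := fun y => y) hY.aemeasurable aestronglyMeasurable_id,
      setIntegral_preimage_eq_of_condExp_comap_eq hX hYint hXY (measurableSet_singleton a),
      setIntegral_congr_fun (hX (measurableSet_singleton a)) (g := fun _ => a) fun _ h => h,
      setIntegral_const, map_measureReal_apply hX (measurableSet_singleton a)]

theorem HasMartingaleCoupling.exists_isMartingaleDensityFamily {p : ι → ℝ} {x : ι → E}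
    {ν : Measure E}
    (h : HasMartingaleCoupling (∑ i, ENNReal.ofReal (p i) • Measure.dirac (x i)) ν)
    (hp : ∀ i, 0 < p i) (hpsum : ∑ i, p i = 1) :
    ∃ f, IsMartingaleDensityFamily p x ν f := by
  classical
  obtain ⟨Ω, _, P, X, Y, _, hX, hY, hYint, hlawX, rfl, hXY⟩ := h
  have hA : P (X ⁻¹' (↑(univ.image x))ᶜ) = 0 := by
    rw [← Measure.map_apply hX (univ.image x).finite_toSet.measurableSet.compl, hlawX]
    exact sum_smul_dirac_compl_image _ x
  exact (hlawX ▸ isMartingaleSplitting_of_condExp_comap_eq hX hY hYint hXY hA)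
    |>.exists_isMartingaleDensityFamily hp hpsum

end Densities

theorem IsMartingaleDensityFamily.hasMartingaleCoupling {ι E : Type} [Fintype ι]
    [NormedAddCommGroup E] [NormedSpace ℝ E] [CompleteSpace E] [MeasurableSpace E]
    [BorelSpace E] [SecondCountableTopology E] {p : ι → ℝ} {x : ι → E} {ν : Measure E}
    {f : ι → E → ℝ} (hf : IsMartingaleDensityFamily p x ν f) (hp : ∀ i, 0 < p i)
    (hpsum : ∑ i, p i = 1) (hmom : Integrable (fun y => y) ν) :
    HasMartingaleCoupling (∑ i, ENNReal.ofReal (p i) • Measure.dirac (x i)) ν := by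
  let _ : MeasurableSpace ι := ⊤
  set κ := fun i => ν.withDensity fun y => ENNReal.ofReal (f i y)
  have := hf.isProbabilityMeasure_withDensity
  have := isProbabilityMeasure_mixture (κ := κ) (fun i => (hp i).le) hpsum
  have hX : Measurable fun z : ι × E => x z.1 := Measurable.of_discrete.comp measurable_fst
  refine ⟨ι × E, inferInstance, mixture p κ, fun z => x z.1, Prod.snd, inferInstance, hX,
    measurable_snd, integrable_mixture (hf.integrable_withDensity hp hmom), ?_, ?_,
    condExp_snd_mixture (fun i => (hp i).le) (hf.integrable_withDensity hp hmom)
      hf.integral_withDensity⟩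
  · simp [map_mixture hX, Measure.map_const]
  · simpa [map_mixture measurable_snd] using hf.sum_smul_withDensity fun i => (hp i).le

/-- Let `μ = Σ pᵢ δ_{xᵢ}` be a centered finitely supported probability measure on `ℝⁿ` and
`ν` a centered probability measure on `ℝⁿ` with a density and finite first moment, not
supported on any hyperplane.  Then a martingale coupling `(X, Y)` of `μ` and `ν` exists if
and only if there are nonnegative functions `f₁, …, f_m` with `Σ pᵢ fᵢ ≡ 1`,
`E[fᵢ(Y)] = 1` and `E[Y fᵢ(Y)] = xᵢ`. -/
theorem statement_11 (n m : ℕ)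
    (p : Fin m → ℝ) (x : Fin m → EuclideanSpace ℝ (Fin n))
    (hp : ∀ i, 0 < p i) (hpsum : ∑ i, p i = 1)
    (ν : Measure (EuclideanSpace ℝ (Fin n)))
    (hmom : Integrable (fun y => y) ν) :
    (∃ (Ω : Type) (mΩ : MeasurableSpace Ω) (P : Measure Ω)
       (X Y : Ω → EuclideanSpace ℝ (Fin n)),
       IsProbabilityMeasure P ∧ Measurable X ∧ Measurable Y ∧ Integrable Y P ∧
       Measure.map X P = ∑ i, ENNReal.ofReal (p i) • Measure.dirac (x i) ∧
       Measure.map Y P = ν ∧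
       P[Y | MeasurableSpace.comap X (by infer_instance)] =ᵐ[P] X) ↔
    (∃ f : Fin m → EuclideanSpace ℝ (Fin n) → ℝ,
       (∀ i, Measurable (f i)) ∧ (∀ i y, 0 ≤ f i y) ∧
       (∀ y, ∑ i, p i * f i y = 1) ∧
       (∀ i, ∫ y, f i y ∂ν = 1) ∧
       (∀ i, ∫ y, f i y • y ∂ν = x i)) := by
  refine ⟨fun h => ?_, fun ⟨f, hfm, hf0, hfsum, hf1, hfx⟩ =>
    IsMartingaleDensityFamily.hasMartingaleCoupling ⟨hfm, hf0, hfsum, hf1, hfx⟩ hp hpsum hmom⟩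
  obtain ⟨f, hf⟩ := HasMartingaleCoupling.exists_isMartingaleDensityFamily h hp hpsum
  exact ⟨f, hf.measurable, hf.nonneg, hf.sum_mul_eq_one, hf.integral_eq_one, hf.integral_smul_eq⟩
end

section
/- Let K be a convex set in ℝⁿ and let O be a (closed) coordinate orthant of ℝⁿ. Then the solidification of K ∩ O, defined as C = {y ∈ ℝⁿ : ∃ x ∈ K ∩ O with |x_i| ≥ |y_i| for all i}, is a convex set. -/
/-! On a closed orthant with signs `εᵢ`, the absolute value of each coordinate is the linear
function `x ↦ εᵢ xᵢ`. Hence for `x₁, x₂` in the orthant and `|yⱼ i| ≤ |xⱼ i|`, the triangle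
inequality gives `|a y₁ i + b y₂ i| ≤ a |x₁ i| + b |x₂ i| = |a x₁ i + b x₂ i|`, so the convex
combination of the dominating points dominates the convex combination of the `yⱼ`. -/

lemma abs_add_of_mul_nonneg {ε u v : ℝ} (hε : ε ≠ 0) (hu : 0 ≤ ε * u) (hv : 0 ≤ ε * v) :
    |u + v| = |u| + |v| := by
  rw [abs_add_eq_add_abs_iff]
  rcases hε.lt_or_gt with hneg | hpos
  · exact Or.inr ⟨nonpos_of_mul_nonneg_right hu hneg, nonpos_of_mul_nonneg_right hv hneg⟩
  · exact Or.inl ⟨nonneg_of_mul_nonneg_right hu hpos, nonneg_of_mul_nonneg_right hv hpos⟩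

lemma convex_setOf_forall_mul_nonneg {ι : Type*} (ε : ι → ℝ) :
    Convex ℝ {z : EuclideanSpace ℝ ι | ∀ i, 0 ≤ ε i * z i} := by
  intro x hx y hy a b ha hb _ i
  simp only [PiLp.add_apply, PiLp.smul_apply, smul_eq_mul]
  have : ε i * (a * x i + b * y i) = a * (ε i * x i) + b * (ε i * y i) := by ring
  rw [this]
  exact add_nonneg (mul_nonneg ha (hx i)) (mul_nonneg hb (hy i))

theorem Convex.solidification_of_subset_orthant {ι : Type*} {S : Set (EuclideanSpace ℝ ι)}
    (hS : Convex ℝ S) {ε : ι → ℝ} (hε : ∀ i, ε i ≠ 0) (hSO : ∀ x ∈ S, ∀ i, 0 ≤ ε i * x i) :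
    Convex ℝ {y : EuclideanSpace ℝ ι | ∃ x ∈ S, ∀ i, |y i| ≤ |x i|} := by
  rintro y₁ ⟨x₁, hx₁, hy₁⟩ y₂ ⟨x₂, hx₂, hy₂⟩ a b ha hb hab
  refine ⟨a • x₁ + b • x₂, hS hx₁ hx₂ ha hb hab, fun i => ?_⟩
  have hax : 0 ≤ ε i * (a * x₁ i) := by
    rw [mul_left_comm]; exact mul_nonneg ha (hSO x₁ hx₁ i)
  have hbx : 0 ≤ ε i * (b * x₂ i) := by
    rw [mul_left_comm]; exact mul_nonneg hb (hSO x₂ hx₂ i)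
  simp only [PiLp.add_apply, PiLp.smul_apply, smul_eq_mul]
  calc |a * y₁ i + b * y₂ i| ≤ |a * y₁ i| + |b * y₂ i| := abs_add_le _ _
    _ = a * |y₁ i| + b * |y₂ i| := by rw [abs_mul, abs_mul, abs_of_nonneg ha, abs_of_nonneg hb]
    _ ≤ a * |x₁ i| + b * |x₂ i| :=
      add_le_add (mul_le_mul_of_nonneg_left (hy₁ i) ha) (mul_le_mul_of_nonneg_left (hy₂ i) hb)
    _ = |a * x₁ i| + |b * x₂ i| := by rw [abs_mul, abs_mul, abs_of_nonneg ha, abs_of_nonneg hb]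
    _ = |a * x₁ i + b * x₂ i| := (abs_add_of_mul_nonneg (hε i) hax hbx).symm

/-- Let `K` be a convex set in `ℝⁿ` and `O` a closed coordinate orthant.  Then the
solidification `C = {y : ∃ x ∈ K ∩ O, |xᵢ| ≥ |yᵢ| for all i}` of `K ∩ O` is convex. -/
theorem statement_18 (n : ℕ) (K : Set (EuclideanSpace ℝ (Fin n))) (hK : Convex ℝ K)
    (ε : Fin n → ℝ) (hε : ∀ i, ε i = 1 ∨ ε i = -1) :
    Convex ℝ {y : EuclideanSpace ℝ (Fin n) |
      ∃ x ∈ K ∩ {z : EuclideanSpace ℝ (Fin n) | ∀ i, 0 ≤ ε i * z i},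
        ∀ i, |y i| ≤ |x i|} := by
  have hε₀ : ∀ i, ε i ≠ 0 := fun i => by rcases hε i with h | h <;> rw [h] <;> norm_num
  exact (hK.inter (convex_setOf_forall_mul_nonneg ε)).solidification_of_subset_orthant hε₀
    fun _ hx => hx.2
end
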